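/- arXiv:1708.04141 — 5 statements merged into one kernel-verified Lean document; each statement's English description precedes it below -/
import Mathlib

section
/- Let A be an n×n complex matrix (n ≥ 1) with Hermitian part B = (A + Aᴴ)/2, and let z ∈ ℂ be a fremdervalue of A, i.e. zI − A has a nontrivial fremdervector. Then min λ(B) ≤ Re(z) ≤ max λ(B), where λ(B) denotes the (real) eigenvalues of the Hermitian matrix B. -/
open Matrix

/-- If `z` is a fremdervalue of `A` (i.e. `zI - A` has a
nontrivial fremdervector), then `min λ(B) ≤ Re z ≤ max λ(B)`, where `B` is
the Hermitian part `(A + Aᴴ)/2` of `A` and `λ(B)` its real eigenvalues. -/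
theorem fremdervalue_re_bounds {n : ℕ}
    (A : Matrix (Fin (n + 1)) (Fin (n + 1)) ℂ) (z : ℂ)
    (hB : (((1 : ℂ) / 2) • (A + Aᴴ)).IsHermitian)
    (hz : ∃ x : Fin (n + 1) → ℂ,
      star x ⬝ᵥ (z • (1 : Matrix (Fin (n + 1)) (Fin (n + 1)) ℂ) - A).mulVec x = 0 ∧
      (z • (1 : Matrix (Fin (n + 1)) (Fin (n + 1)) ℂ) - A).mulVec x ≠ 0 ∧
      (z • (1 : Matrix (Fin (n + 1)) (Fin (n + 1)) ℂ) - A)ᴴ.mulVec x ≠ 0) :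
    (⨅ i, hB.eigenvalues i) ≤ z.re ∧ z.re ≤ ⨆ i, hB.eigenvalues i := by
  obtain ⟨x, h0, h1, -⟩ := hz
  set B : Matrix (Fin (n + 1)) (Fin (n + 1)) ℂ := ((1 : ℂ) / 2) • (A + Aᴴ) with hBdef
  have hx : x ≠ 0 := by
    rintro rfl; exact h1 (by simp)
  -- s = ‖x‖²
  set s : ℝ := ∑ i, Complex.normSq (x i) with hs
  have hspos : 0 < s := by
    have : ∃ i, x i ≠ 0 := by
      by_contra h; push_neg at h; exact hx (funext h)
    obtain ⟨i, hi⟩ := this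
    exact Finset.sum_pos' (fun j _ => Complex.normSq_nonneg _)
      ⟨i, Finset.mem_univ i, Complex.normSq_pos.mpr hi⟩
  have hxx : star x ⬝ᵥ x = (s : ℂ) := by
    simp [dotProduct, hs, Complex.normSq_eq_conj_mul_self]
  -- from h0 : z * s = ⟨x, A x⟩
  have hzA : z * (s : ℂ) = star x ⬝ᵥ A.mulVec x := by
    have := h0
    rw [sub_mulVec, dotProduct_sub, sub_eq_zero] at this
    rw [← this, smul_mulVec, one_mulVec, dotProduct_smul, hxx, smul_eq_mul]
  -- conjugate relation
  have hAH : star x ⬝ᵥ Aᴴ.mulVec x = star (star x ⬝ᵥ A.mulVec x) := by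
    simp [dotProduct, mulVec, Finset.mul_sum, Finset.sum_mul, mul_comm, mul_assoc,
      mul_left_comm, conjTranspose_apply]
    rw [Finset.sum_comm]
  have hReB : star x ⬝ᵥ B.mulVec x = ((z.re * s : ℝ) : ℂ) := by
    rw [hBdef, smul_mulVec, dotProduct_smul, add_mulVec, dotProduct_add, hAH, ← hzA]
    rw [show star (z * (s : ℂ)) = (starRingEnd ℂ) (z * (s : ℂ)) from rfl, Complex.add_conj]
    simp [smul_eq_mul, Complex.mul_re, Complex.ext_iff]
  -- spectral decomposition
  set y : Fin (n + 1) → ℂ := star (hB.eigenvectorUnitary : Matrix (Fin (n + 1)) (Fin (n + 1)) ℂ) *ᵥ x with hy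
  have hUU : (hB.eigenvectorUnitary : Matrix (Fin (n + 1)) (Fin (n + 1)) ℂ) *
      star (hB.eigenvectorUnitary : Matrix (Fin (n + 1)) (Fin (n + 1)) ℂ) = 1 :=
    mem_unitaryGroup_iff.mp hB.eigenvectorUnitary.2
  have hsy : star x ᵥ* (hB.eigenvectorUnitary : Matrix (Fin (n + 1)) (Fin (n + 1)) ℂ) = star y := by
    rw [hy, star_mulVec, star_eq_conjTranspose, conjTranspose_conjTranspose]
  have hyy : ∑ i, Complex.normSq (y i) = s := by
    have h3 : star y ⬝ᵥ y = star x ⬝ᵥ x := by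
      conv_lhs => rw [hy, ← hsy, dotProduct_mulVec, vecMul_vecMul, hUU, vecMul_one]
    have h2 : star y ⬝ᵥ y = ((∑ i, Complex.normSq (y i) : ℝ) : ℂ) := by
      simp [dotProduct, Complex.normSq_eq_conj_mul_self]
    rw [hxx] at h3
    exact_mod_cast h2.symm.trans h3
  have hquad : z.re * s = ∑ i, hB.eigenvalues i * Complex.normSq (y i) := by
    have key : star x ⬝ᵥ B.mulVec x
        = ((∑ i, hB.eigenvalues i * Complex.normSq (y i) : ℝ) : ℂ) := by
      conv_lhs => rw [hB.spectral_theorem, Unitary.conjStarAlgAut_apply, ← mulVec_mulVec, ← mulVec_mulVec,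
        dotProduct_mulVec, hsy, ← hy]
      simp [dotProduct, mulVec_diagonal, Complex.normSq_eq_conj_mul_self, Function.comp]
      congr 1; funext i; ring
    rw [key] at hReB
    exact_mod_cast hReB.symm
  constructor
  · have hlow : (⨅ i, hB.eigenvalues i) * s ≤ z.re * s := by
      rw [hquad, ← hyy, Finset.mul_sum]
      apply Finset.sum_le_sum
      intro i _
      exact mul_le_mul_of_nonneg_right (ciInf_le (Finite.bddBelow_range _) i)
        (Complex.normSq_nonneg _)
    exact le_of_mul_le_mul_right hlow hspos
  · have hhigh : z.re * s ≤ (⨆ i, hB.eigenvalues i) * s := by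
      rw [hquad, ← hyy, Finset.mul_sum]
      apply Finset.sum_le_sum
      intro i _
      exact mul_le_mul_of_nonneg_right (le_ciSup (Finite.bddAbove_range _) i)
        (Complex.normSq_nonneg _)
    exact le_of_mul_le_mul_right hhigh hspos
end

section
/- Let A be an n×n complex matrix (n ≥ 1) with skew-Hermitian part C = (A − Aᴴ)/2, and let z ∈ ℂ be a fremdervalue of A, i.e. zI − A has a nontrivial fremdervector. Then min λ((−i)C) ≤ Im(z) ≤ max λ((−i)C), where λ((−i)C) denotes the (real) eigenvalues of the Hermitian matrix (−i)C, which are the imaginary parts of the eigenvalues of C. -/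
open Matrix

/-- If `z` is a fremdervalue of `A` (i.e. `zI - A` has a
nontrivial fremdervector), then `min λ((-i)C) ≤ Im z ≤ max λ((-i)C)`, where
`C` is the skew-Hermitian part `(A - Aᴴ)/2` of `A` and `λ((-i)C)` denotes
the real eigenvalues of the Hermitian matrix `(-i)C`. -/
theorem fremdervalue_im_bounds {n : ℕ}
    (A : Matrix (Fin (n + 1)) (Fin (n + 1)) ℂ) (z : ℂ)
    (hC : ((-Complex.I) • (((1 : ℂ) / 2) • (A - Aᴴ))).IsHermitian)
    (hz : ∃ x : Fin (n + 1) → ℂ,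
      star x ⬝ᵥ (z • (1 : Matrix (Fin (n + 1)) (Fin (n + 1)) ℂ) - A).mulVec x = 0 ∧
      (z • (1 : Matrix (Fin (n + 1)) (Fin (n + 1)) ℂ) - A).mulVec x ≠ 0 ∧
      (z • (1 : Matrix (Fin (n + 1)) (Fin (n + 1)) ℂ) - A)ᴴ.mulVec x ≠ 0) :
    (⨅ i, hC.eigenvalues i) ≤ z.im ∧ z.im ≤ ⨆ i, hC.eigenvalues i := by
  obtain ⟨x, h0, hne, -⟩ := hz
  have hx : x ≠ 0 := by
    rintro rfl
    exact hne (by simp)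
  set B := ((-Complex.I) • (((1 : ℂ) / 2) • (A - Aᴴ))) with hB
  set w : ℂ := star x ⬝ᵥ x with hw
  have hAx : star x ⬝ᵥ A.mulVec x = z * w := by
    have := h0
    rw [sub_mulVec, dotProduct_sub, sub_eq_zero] at this
    rw [← this]
    simp [smul_mulVec, dotProduct_smul, hw, smul_eq_mul]
  have hwstar : star w = w := by
    rw [hw, ← star_dotProduct_star, star_star, dotProduct_comm]
  have hAHx : star x ⬝ᵥ Aᴴ.mulVec x = star z * w := by
    have h1 : star x ⬝ᵥ Aᴴ.mulVec x = star (star (Aᴴ.mulVec x) ⬝ᵥ x) := star_dotProduct _ _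
    rw [h1, star_mulVec, conjTranspose_conjTranspose, ← dotProduct_mulVec, hAx, star_mul',
      hwstar]
  -- complex Rayleigh identity for the skew part
  have hBx : star x ⬝ᵥ B.mulVec x = (z.im : ℂ) * w := by
    rw [hB, smul_mulVec, dotProduct_smul, smul_mulVec, dotProduct_smul,
      sub_mulVec, dotProduct_sub, hAx, hAHx, smul_eq_mul, smul_eq_mul]
    have hzs : z * w - star z * w = ((2 * z.im : ℝ) * Complex.I) * w := by
      rw [← sub_mul, ← Complex.sub_conj]; rfl
    rw [hzs]
    push_cast
    ring_nf
    rw [Complex.I_sq]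
    ring
  -- spectral decomposition
  set U := (hC.eigenvectorUnitary : Matrix (Fin (n + 1)) (Fin (n + 1)) ℂ) with hU
  set y : Fin (n + 1) → ℂ := star U *ᵥ x with hy
  have hUU : U * star U = 1 := mem_unitaryGroup_iff.mp hC.eigenvectorUnitary.2
  have hUy : U *ᵥ y = x := by
    rw [hy, mulVec_mulVec, hUU, one_mulVec]
  have hystar : star y = star x ᵥ* U := by
    simp [hy, star_mulVec, star_eq_conjTranspose, conjTranspose_conjTranspose]
  have hyne : y ≠ 0 := by
    rintro h; apply hx; rw [← hUy, h, mulVec_zero]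
  have hBy : star x ⬝ᵥ B.mulVec x
      = ∑ i, (hC.eigenvalues i : ℂ) * Complex.normSq (y i) := by
    conv_lhs => rw [show B.mulVec x = B *ᵥ x from rfl, hC.spectral_theorem,
      Unitary.conjStarAlgAut_apply,
      ← mulVec_mulVec, ← mulVec_mulVec]
    rw [dotProduct_mulVec, ← hystar]
    simp only [dotProduct, mulVec_diagonal]
    refine Finset.sum_congr rfl fun i _ => ?_
    simp only [Pi.star_apply, Function.comp_apply, RCLike.star_def]
    rw [Complex.normSq_eq_conj_mul_self]
    exact mul_left_comm ((starRingEnd ℂ) (y i)) ((hC.eigenvalues i : ℂ)) (y i)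
  have hwS : w = ∑ i, (Complex.normSq (y i) : ℂ) := by
    have : star y ⬝ᵥ y = w := by
      rw [hystar, ← dotProduct_mulVec, mulVec_mulVec, hUU, one_mulVec]
    rw [← this]
    simp only [dotProduct, Pi.star_apply, RCLike.star_def]
    exact Finset.sum_congr rfl fun i _ => by
      rw [Complex.normSq_eq_conj_mul_self]
  set S : ℝ := ∑ i, Complex.normSq (y i) with hS
  have hSpos : 0 < S := by
    obtain ⟨i, hi⟩ := Function.ne_iff.mp hyne
    exact Finset.sum_pos' (fun j _ => Complex.normSq_nonneg _)
      ⟨i, Finset.mem_univ i, Complex.normSq_pos.2 hi⟩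
  have key : z.im * S = ∑ i, hC.eigenvalues i * Complex.normSq (y i) := by
    have := hBx.symm.trans hBy
    rw [hwS] at this
    have := congrArg Complex.re this
    push_cast at this
    simpa using this
  constructor
  · have h1 : (⨅ i, hC.eigenvalues i) * S ≤ z.im * S := by
      rw [key, hS, Finset.mul_sum]
      refine Finset.sum_le_sum fun i _ => ?_
      exact mul_le_mul_of_nonneg_right (ciInf_le (Finite.bddBelow_range _) i)
        (Complex.normSq_nonneg _)
    exact le_of_mul_le_mul_right h1 hSpos
  · have h1 : z.im * S ≤ (⨆ i, hC.eigenvalues i) * S := by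
      rw [key, hS, Finset.mul_sum]
      refine Finset.sum_le_sum fun i _ => ?_
      exact mul_le_mul_of_nonneg_right (le_ciSup (Finite.bddAbove_range _) i)
        (Complex.normSq_nonneg _)
    exact le_of_mul_le_mul_right h1 hSpos
end

section
/- Let A be an n×n complex normal matrix (AAᴴ = AᴴA, n ≥ 1), and let z ∈ ℂ be a fremdervalue of A. Then there exist eigenvalues μ₁, μ₂, μ₃, μ₄ of A (elements of the spectrum of A) such that Re(μ₁) ≤ Re(z) ≤ Re(μ₂) and Im(μ₃) ≤ Im(z) ≤ Im(μ₄). -/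
open Matrix Module.End

section aux

lemma aux_mem_spectrum {N : ℕ} (A : Matrix (Fin N) (Fin N) ℂ) {μ : ℂ}
    {v : Fin N → ℂ} (hv : v ≠ 0) (h : A.mulVec v = μ • v) : μ ∈ spectrum ℂ A := by
  rw [spectrum.mem_iff]
  intro hunit
  have hdet : (algebraMap ℂ (Matrix (Fin N) (Fin N) ℂ) μ - A).det = 0 := by
    rw [← Matrix.exists_mulVec_eq_zero_iff]
    refine ⟨v, hv, ?_⟩
    rw [Matrix.sub_mulVec, h]
    simp [Algebra.algebraMap_eq_smul_one, Matrix.smul_mulVec]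
  have := (Matrix.isUnit_iff_isUnit_det _).mp hunit
  rw [hdet] at this
  exact this.ne_zero rfl

variable {E : Type*} [NormedAddCommGroup E] [InnerProductSpace ℂ E] [FiniteDimensional ℂ E]

local notation "⟪" x ", " y "⟫" => @inner ℂ _ _ x y

lemma aux_joint {S K : E →ₗ[ℂ] E} (hK : K.IsSymmetric)
    (hSK : Commute S K) {α : ℂ} (hα : HasEigenvalue S α) :
    ∃ β : ℂ, (starRingEnd ℂ) β = β ∧ ∃ v : E, v ≠ 0 ∧ S v = α • v ∧ K v = β • v := by
  have h := LinearMap.IsSymmetric.iSup_eigenspace_inf_eigenspace_of_commute (α := α) hK hSK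
  have hne : eigenspace S α ≠ ⊥ := hα
  rw [← h] at hne
  have : ∃ γ : ℂ, eigenspace S α ⊓ eigenspace K γ ≠ ⊥ := by
    by_contra hc
    push_neg at hc
    simp only [hc, iSup_bot] at hne
    exact hne rfl
  obtain ⟨γ, hγ⟩ := this
  obtain ⟨v, hvmem, hv0⟩ := Submodule.exists_mem_ne_zero_of_ne_bot hγ
  obtain ⟨hv1, hv2⟩ := hvmem
  have hγreal : (starRingEnd ℂ) γ = γ :=
    hK.conj_eigenvalue_eq_self (hasEigenvalue_of_hasEigenvector ⟨hv2, hv0⟩)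
  exact ⟨γ, hγreal, v, hv0, mem_eigenspace_iff.mp hv1, mem_eigenspace_iff.mp hv2⟩

lemma aux_rayleigh {S : E →ₗ[ℂ] E} (hS : S.IsSymmetric) {x : E} (hx : x ≠ 0) :
    ∃ a b : ℝ, HasEigenvalue S (a : ℂ) ∧ HasEigenvalue S (b : ℂ) ∧
      a ≤ RCLike.re ⟪S x, x⟫ / ‖x‖ ^ 2 ∧ RCLike.re ⟪S x, x⟫ / ‖x‖ ^ 2 ≤ b := by
  haveI : Nontrivial E := nontrivial_of_ne x 0 hx
  set S' := LinearMap.toContinuousLinearMap S with hS'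
  have hbound : ∀ y : {y : E // y ≠ 0}, |RCLike.re ⟪S y.1, y.1⟫ / ‖y.1‖ ^ 2| ≤ ‖S'‖ := by
    rintro ⟨y, hy⟩
    have hy0 : ‖y‖ ≠ 0 := norm_ne_zero_iff.mpr hy
    have hny : (0:ℝ) < ‖y‖ ^ 2 := by positivity
    rw [abs_div, abs_of_pos hny, div_le_iff₀ hny]
    calc |RCLike.re ⟪S y, y⟫| ≤ ‖⟪S y, y⟫‖ := RCLike.abs_re_le_norm _
      _ ≤ ‖S y‖ * ‖y‖ := norm_inner_le_norm _ _
      _ = ‖S' y‖ * ‖y‖ := rfl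
      _ ≤ (‖S'‖ * ‖y‖) * ‖y‖ := by gcongr; exact S'.le_opNorm y
      _ = ‖S'‖ * ‖y‖ ^ 2 := by ring
  have hAbove : BddAbove (Set.range fun y : {y : E // y ≠ 0} =>
      RCLike.re ⟪S y.1, y.1⟫ / ‖y.1‖ ^ 2) := by
    refine ⟨‖S'‖, ?_⟩
    rintro r ⟨y, rfl⟩
    exact (abs_le.mp (hbound y)).2
  have hBelow : BddBelow (Set.range fun y : {y : E // y ≠ 0} =>
      RCLike.re ⟪S y.1, y.1⟫ / ‖y.1‖ ^ 2) := by
    refine ⟨-‖S'‖, ?_⟩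
    rintro r ⟨y, rfl⟩
    exact (abs_le.mp (hbound y)).1
  exact ⟨_, _, hS.hasEigenvalue_iInf_of_finiteDimensional,
    hS.hasEigenvalue_iSup_of_finiteDimensional,
    ciInf_le hBelow (⟨x, hx⟩ : {y : E // y ≠ 0}),
    le_ciSup hAbove (⟨x, hx⟩ : {y : E // y ≠ 0})⟩

lemma aux_spec_re {N : ℕ} (A : Matrix (Fin N) (Fin N) ℂ)
    {S K : EuclideanSpace ℂ (Fin N) →ₗ[ℂ] EuclideanSpace ℂ (Fin N)}
    (hK : K.IsSymmetric) (hSK : Commute S K)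
    (hT : Matrix.toEuclideanLin A = S + Complex.I • K) {a : ℝ}
    (ha : HasEigenvalue S (a : ℂ)) : ∃ μ ∈ spectrum ℂ A, μ.re = a := by
  obtain ⟨β, hβ, v, hv0, hvS, hvK⟩ := aux_joint hK hSK ha
  set μ : ℂ := (a : ℂ) + Complex.I * β with hμ
  have hTv : Matrix.toEuclideanLin A v = μ • v := by
    rw [hT]
    simp only [LinearMap.add_apply, LinearMap.smul_apply, hvS, hvK, smul_smul, hμ]
    rw [← add_smul]
  have hmv : A.mulVec (WithLp.equiv 2 (Fin N → ℂ) v) = μ • (WithLp.equiv 2 (Fin N → ℂ) v) := by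
    have := congrArg (WithLp.equiv 2 (Fin N → ℂ)) hTv
    exact this
  have hw0 : (WithLp.equiv 2 (Fin N → ℂ)) v ≠ 0 := by
    intro h
    exact hv0 ((WithLp.equiv 2 (Fin N → ℂ)).injective (by simp [h]))
  refine ⟨μ, aux_mem_spectrum A hw0 hmv, ?_⟩
  have him : β.im = 0 := Complex.conj_eq_iff_im.mp hβ
  simp [hμ, Complex.add_re, Complex.mul_re, him]

lemma aux_spec_im {N : ℕ} (A : Matrix (Fin N) (Fin N) ℂ)
    {S K : EuclideanSpace ℂ (Fin N) →ₗ[ℂ] EuclideanSpace ℂ (Fin N)}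
    (hS : S.IsSymmetric) (hSK : Commute S K)
    (hT : Matrix.toEuclideanLin A = S + Complex.I • K) {c : ℝ}
    (hc : HasEigenvalue K (c : ℂ)) : ∃ μ ∈ spectrum ℂ A, μ.im = c := by
  obtain ⟨β, hβ, v, hv0, hvK, hvS⟩ := aux_joint hS hSK.symm hc
  set μ : ℂ := β + Complex.I * (c : ℂ) with hμ
  have hTv : Matrix.toEuclideanLin A v = μ • v := by
    rw [hT]
    simp only [LinearMap.add_apply, LinearMap.smul_apply, hvS, hvK, smul_smul, hμ]
    rw [← add_smul]
  have hmv : A.mulVec (WithLp.equiv 2 (Fin N → ℂ) v) = μ • (WithLp.equiv 2 (Fin N → ℂ) v) := by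
    have := congrArg (WithLp.equiv 2 (Fin N → ℂ)) hTv
    exact this
  have hw0 : (WithLp.equiv 2 (Fin N → ℂ)) v ≠ 0 := by
    intro h
    exact hv0 ((WithLp.equiv 2 (Fin N → ℂ)).injective (by simp [h]))
  refine ⟨μ, aux_mem_spectrum A hw0 hmv, ?_⟩
  have him : β.im = 0 := Complex.conj_eq_iff_im.mp hβ
  simp [hμ, Complex.add_im, Complex.mul_im, him]

end aux

/-- If `A` is normal and `z` is a fremdervalue of `A`, then
there are eigenvalues `μ₁, μ₂, μ₃, μ₄` of `A` with
`Re μ₁ ≤ Re z ≤ Re μ₂` and `Im μ₃ ≤ Im z ≤ Im μ₄`. -/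
theorem fremdervalue_bounds_of_normal {n : ℕ}
    (A : Matrix (Fin (n + 1)) (Fin (n + 1)) ℂ)
    (hA : A * Aᴴ = Aᴴ * A) (z : ℂ)
    (hz : ∃ x : Fin (n + 1) → ℂ,
      star x ⬝ᵥ (z • (1 : Matrix (Fin (n + 1)) (Fin (n + 1)) ℂ) - A).mulVec x = 0 ∧
      (z • (1 : Matrix (Fin (n + 1)) (Fin (n + 1)) ℂ) - A).mulVec x ≠ 0 ∧
      (z • (1 : Matrix (Fin (n + 1)) (Fin (n + 1)) ℂ) - A)ᴴ.mulVec x ≠ 0) :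
    ∃ μ₁ ∈ spectrum ℂ A, ∃ μ₂ ∈ spectrum ℂ A, ∃ μ₃ ∈ spectrum ℂ A, ∃ μ₄ ∈ spectrum ℂ A,
      μ₁.re ≤ z.re ∧ z.re ≤ μ₂.re ∧ μ₃.im ≤ z.im ∧ z.im ≤ μ₄.im := by
  classical
  obtain ⟨x, hxz, hMx, -⟩ := hz
  have hx0 : x ≠ 0 := by
    rintro rfl
    exact hMx (Matrix.mulVec_zero _)
  set E := EuclideanSpace ℂ (Fin (n + 1))
  set T : E →ₗ[ℂ] E := Matrix.toEuclideanLin A with hTdef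
  set T' : E →ₗ[ℂ] E := LinearMap.adjoint T with hT'def
  have hT'A : Matrix.toEuclideanLin Aᴴ = T' := Matrix.toEuclideanLin_conjTranspose_eq_adjoint A
  have hmul : ∀ M N : Matrix (Fin (n+1)) (Fin (n+1)) ℂ,
      Matrix.toEuclideanLin (M * N) = Matrix.toEuclideanLin M * Matrix.toEuclideanLin N := by
    intro M N
    ext v
    simp [Matrix.toEuclideanLin_apply, Matrix.mulVec_mulVec, Module.End.mul_apply]
  have hcomm : Commute T T' := by
    unfold Commute SemiconjBy
    rw [← hT'A, hTdef, ← hmul, ← hmul, hA]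
  set S : E →ₗ[ℂ] E := (2⁻¹ : ℂ) • (T + T') with hSdef
  set K : E →ₗ[ℂ] E := (-(Complex.I) / 2) • (T - T') with hKdef
  have hS : S.IsSymmetric := by
    rw [LinearMap.isSymmetric_iff_isSelfAdjoint]
    unfold _root_.IsSelfAdjoint
    rw [hSdef, star_smul, star_add, LinearMap.star_eq_adjoint, LinearMap.star_eq_adjoint,
      hT'def, LinearMap.adjoint_adjoint]
    rw [show star (2⁻¹ : ℂ) = (2⁻¹ : ℂ) by norm_num [Complex.ext_iff]]
    module
  have hK : K.IsSymmetric := by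
    rw [LinearMap.isSymmetric_iff_isSelfAdjoint]
    unfold _root_.IsSelfAdjoint
    rw [hKdef, star_smul, star_sub, LinearMap.star_eq_adjoint, LinearMap.star_eq_adjoint,
      hT'def, LinearMap.adjoint_adjoint]
    rw [show star (-(Complex.I) / 2 : ℂ) = (Complex.I / 2 : ℂ) by
      simp [Complex.ext_iff]]
    match_scalars <;> ring
  have hSK : Commute S K := by
    have h1 : Commute (T + T') (T - T') :=
      Commute.add_left (Commute.sub_right (Commute.refl T) hcomm)
        (Commute.sub_right hcomm.symm (Commute.refl T'))
    exact (h1.smul_left _).smul_right _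
  have hT_eq : Matrix.toEuclideanLin A = S + Complex.I • K := by
    rw [← hTdef, hSdef, hKdef]
    match_scalars
    · linear_combination (1/2 : ℂ) * Complex.I_sq
    · linear_combination (-1/2 : ℂ) * Complex.I_sq
  -- the vector in EuclideanSpace
  set xe : E := (WithLp.equiv 2 (Fin (n+1) → ℂ)).symm x with hxe
  have hxe0 : xe ≠ 0 := by
    intro h
    exact hx0 (by simpa [hxe] using congrArg (WithLp.equiv 2 (Fin (n+1) → ℂ)) h)
  have hnorm : (0:ℝ) < ‖xe‖ ^ 2 := pow_pos (norm_pos_iff.mpr hxe0) 2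
  -- dot product identities
  have hdot : star x ⬝ᵥ A.mulVec x = z * (star x ⬝ᵥ x) := by
    have := hxz
    rw [Matrix.sub_mulVec, Matrix.smul_mulVec, Matrix.one_mulVec,
      dotProduct_sub, dotProduct_smul] at this
    have h2 := sub_eq_zero.mp this
    rw [← h2]
    simp [smul_eq_mul]
  have hc : (star x ⬝ᵥ x : ℂ) = (‖xe‖ ^ 2 : ℝ) := by
    rw [show (star x ⬝ᵥ x : ℂ) = @inner ℂ _ _ xe xe from by rw [dotProduct_comm]; rfl]
    exact_mod_cast inner_self_eq_norm_sq_to_K xe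
  have hTx : (inner ℂ xe (T xe) : ℂ) = z * (‖xe‖ ^ 2 : ℝ) := by
    rw [show (inner ℂ xe (T xe) : ℂ) = star x ⬝ᵥ A.mulVec x from ?_, hdot, hc]
    rw [hTdef, hxe]
    exact dotProduct_comm _ _
  have hT'x : (inner ℂ xe (T' xe) : ℂ) = (starRingEnd ℂ) z * (‖xe‖ ^ 2 : ℝ) := by
    rw [hT'def, LinearMap.adjoint_inner_right, ← inner_conj_symm, hTx]
    simp [_root_.map_mul, Complex.conj_ofReal]
  -- real part identity for S
  have hSx : RCLike.re (inner ℂ (S xe) xe : ℂ) = z.re * ‖xe‖ ^ 2 := by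
    have h1 : (inner ℂ xe (S xe) : ℂ) = ((z.re * ‖xe‖ ^ 2 : ℝ) : ℂ) := by
      rw [hSdef]
      simp only [LinearMap.smul_apply, LinearMap.add_apply, inner_smul_right, inner_add_right]
      rw [hTx, hT'x]
      rw [show z * (‖xe‖ ^ 2 : ℝ) + (starRingEnd ℂ) z * (‖xe‖ ^ 2 : ℝ)
          = (z + (starRingEnd ℂ) z) * (‖xe‖ ^ 2 : ℝ) by ring, Complex.add_conj]
      push_cast
      ring
    rw [hS xe xe, h1]
    exact RCLike.ofReal_re _
  have hKx : RCLike.re (inner ℂ (K xe) xe : ℂ) = z.im * ‖xe‖ ^ 2 := by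
    have h1 : (inner ℂ xe (K xe) : ℂ) = ((z.im * ‖xe‖ ^ 2 : ℝ) : ℂ) := by
      rw [hKdef]
      simp only [LinearMap.smul_apply, LinearMap.sub_apply, inner_smul_right, inner_sub_right]
      rw [hTx, hT'x]
      rw [show z * (‖xe‖ ^ 2 : ℝ) - (starRingEnd ℂ) z * (‖xe‖ ^ 2 : ℝ)
          = (z - (starRingEnd ℂ) z) * (‖xe‖ ^ 2 : ℝ) by ring, Complex.sub_conj]
      push_cast
      linear_combination (-(z.im : ℂ) * (‖xe‖ : ℂ) ^ 2) * Complex.I_sq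
    rw [hK xe xe, h1]
    exact RCLike.ofReal_re _
  -- Rayleigh bounds
  obtain ⟨a, b, hae, hbe, hale, hble⟩ := aux_rayleigh hS hxe0
  obtain ⟨c, d, hce, hde, hcle, hdle⟩ := aux_rayleigh hK hxe0
  rw [hSx, mul_div_assoc, div_self hnorm.ne', mul_one] at hale hble
  rw [hKx, mul_div_assoc, div_self hnorm.ne', mul_one] at hcle hdle
  obtain ⟨μ₁, hμ₁, hμ₁re⟩ := aux_spec_re A hK hSK hT_eq hae
  obtain ⟨μ₂, hμ₂, hμ₂re⟩ := aux_spec_re A hK hSK hT_eq hbe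
  obtain ⟨μ₃, hμ₃, hμ₃im⟩ := aux_spec_im A hS hSK hT_eq hce
  obtain ⟨μ₄, hμ₄, hμ₄im⟩ := aux_spec_im A hS hSK hT_eq hde
  exact ⟨μ₁, hμ₁, μ₂, hμ₂, μ₃, hμ₃, μ₄, hμ₄,
    by rw [hμ₁re]; exact hale, by rw [hμ₂re]; exact hble,
    by rw [hμ₃im]; exact hcle, by rw [hμ₄im]; exact hdle⟩
end

section
/- Let A be an n×n complex Hermitian matrix (n ≥ 1) with smallest eigenvalue λ_min and largest eigenvalue λ_max. A complex number z is a fremdervalue of A if and only if z is real and λ_min < z < λ_max. -/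
open Matrix

lemma diag_fremder {n : ℕ} (μ : Fin (n + 1) → ℝ) (z : ℂ) :
    (∃ y : Fin (n + 1) → ℂ,
      star y ⬝ᵥ (diagonal (fun i => z - (μ i : ℂ))).mulVec y = 0 ∧
      (diagonal (fun i => z - (μ i : ℂ))).mulVec y ≠ 0 ∧
      (diagonal (fun i => star (z - (μ i : ℂ)))).mulVec y ≠ 0) ↔
    (z.im = 0 ∧ (⨅ i, μ i) < z.re ∧ z.re < ⨆ i, μ i) := by
  constructor
  · rintro ⟨y, h0, h1, h2⟩
    obtain ⟨i0, hi0⟩ := Function.ne_iff.mp h1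
    simp only [mulVec_diagonal, Pi.zero_apply] at hi0
    have hy0 : y i0 ≠ 0 := right_ne_zero_of_mul hi0
    have hz0 : z ≠ (μ i0 : ℂ) := by
      intro h; apply hi0; rw [h]; simp
    have hsum : ∑ i, (Complex.normSq (y i) : ℂ) * (z - (μ i : ℂ)) = 0 := by
      rw [← h0]
      simp only [dotProduct, mulVec_diagonal, Pi.star_apply, Complex.star_def]
      refine Finset.sum_congr rfl fun i _ => ?_
      rw [← Complex.mul_conj]
      ring
    have him : z.im * ∑ i, Complex.normSq (y i) = 0 := by
      have h := congrArg Complex.im hsum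
      rw [Complex.im_sum, Complex.zero_im] at h
      rw [Finset.mul_sum, ← h]
      refine Finset.sum_congr rfl fun i _ => ?_
      rw [Complex.mul_im]
      simp
      ring
    have hpos : 0 < ∑ i, Complex.normSq (y i) := by
      refine Finset.sum_pos' (fun i _ => Complex.normSq_nonneg _) ⟨i0, Finset.mem_univ _, ?_⟩
      exact Complex.normSq_pos.mpr hy0
    have hzim : z.im = 0 := by
      rcases mul_eq_zero.mp him with h | h
      · exact h
      · exact absurd h hpos.ne'
    have hre : ∑ i, Complex.normSq (y i) * (z.re - μ i) = 0 := by
      have h := congrArg Complex.re hsum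
      rw [Complex.re_sum, Complex.zero_re] at h
      rw [← h]
      refine Finset.sum_congr rfl fun i _ => ?_
      rw [Complex.mul_re]
      simp [hzim]
    have hrene : z.re ≠ μ i0 := by
      intro h
      exact hz0 (Complex.ext (by simpa using h) (by simpa using hzim))
    refine ⟨hzim, ?_, ?_⟩
    · by_contra hc
      push_neg at hc
      have hle : ∀ i, z.re ≤ μ i := fun i =>
        hc.trans (ciInf_le (Set.Finite.bddBelow (Set.finite_range μ)) i)
      have hlt : ∑ i, Complex.normSq (y i) * (z.re - μ i) < ∑ _i : Fin (n + 1), (0 : ℝ) := by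
        refine Finset.sum_lt_sum (fun i _ => ?_) ⟨i0, Finset.mem_univ _, ?_⟩
        · exact mul_nonpos_of_nonneg_of_nonpos (Complex.normSq_nonneg _)
            (sub_nonpos.mpr (hle i))
        · exact mul_neg_of_pos_of_neg (Complex.normSq_pos.mpr hy0)
            (sub_neg.mpr (lt_of_le_of_ne (hle i0) hrene))
      rw [Finset.sum_const_zero] at hlt
      exact absurd hre hlt.ne
    · by_contra hc
      push_neg at hc
      have hle : ∀ i, μ i ≤ z.re := fun i =>
        (le_ciSup (Set.Finite.bddAbove (Set.finite_range μ)) i).trans hc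
      have hlt : ∑ _i : Fin (n + 1), (0 : ℝ) < ∑ i, Complex.normSq (y i) * (z.re - μ i) := by
        refine Finset.sum_lt_sum (fun i _ => ?_) ⟨i0, Finset.mem_univ _, ?_⟩
        · exact mul_nonneg (Complex.normSq_nonneg _) (sub_nonneg.mpr (hle i))
        · exact mul_pos (Complex.normSq_pos.mpr hy0)
            (sub_pos.mpr (lt_of_le_of_ne (hle i0) (Ne.symm hrene)))
      rw [Finset.sum_const_zero] at hlt
      exact absurd hre hlt.ne'
  · rintro ⟨hzim, hlo, hhi⟩
    obtain ⟨j, hj⟩ : ∃ j, μ j < z.re := by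
      by_contra hc
      push_neg at hc
      exact absurd (le_ciInf hc) hlo.not_ge
    obtain ⟨k, hk⟩ : ∃ k, z.re < μ k := by
      by_contra hc
      push_neg at hc
      exact absurd (ciSup_le hc) hhi.not_ge
    have hjk : j ≠ k := fun h => absurd (h ▸ hj) hk.asymm
    set a : ℝ := Real.sqrt (μ k - z.re) with ha
    set b : ℝ := Real.sqrt (z.re - μ j) with hb
    have ha2 : a ^ 2 = μ k - z.re := Real.sq_sqrt (by linarith)
    have hb2 : b ^ 2 = z.re - μ j := Real.sq_sqrt (by linarith)
    have hapos : 0 < a := Real.sqrt_pos.mpr (by linarith)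
    have hbpos : 0 < b := Real.sqrt_pos.mpr (by linarith)
    set y : Fin (n + 1) → ℂ := fun i => if i = j then (a : ℂ) else if i = k then (b : ℂ) else 0
      with hy
    have hyj : y j = (a : ℂ) := by simp [hy]
    have hyk : y k = (b : ℂ) := by simp [hy, hjk.symm]
    have hzre : z = (z.re : ℂ) := Complex.ext (by simp) (by simp [hzim])
    have hzj : z - (μ j : ℂ) ≠ 0 := by
      rw [hzre, ← Complex.ofReal_sub]
      exact Complex.ofReal_ne_zero.mpr (by linarith)
    have hzk : z - (μ k : ℂ) ≠ 0 := by
      rw [hzre, ← Complex.ofReal_sub]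
      exact Complex.ofReal_ne_zero.mpr (by linarith)
    refine ⟨y, ?_, ?_, ?_⟩
    · simp only [dotProduct, mulVec_diagonal, Pi.star_apply]
      rw [← Finset.sum_subset (Finset.subset_univ {j, k})]
      · rw [Finset.sum_pair hjk, hyj, hyk]
        rw [hzre]
        simp only [Complex.star_def, Complex.conj_ofReal]
        have hac : (a:ℂ)^2 = ((μ k : ℂ) - (z.re:ℂ)) := by
          exact_mod_cast congrArg Complex.ofReal ha2
        have hbc : (b:ℂ)^2 = ((z.re : ℂ) - (μ j:ℂ)) := by
          exact_mod_cast congrArg Complex.ofReal hb2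
        linear_combination ((z.re:ℂ) - (μ j:ℂ)) * hac + ((z.re:ℂ) - (μ k:ℂ)) * hbc
      · intro x _ hx
        simp only [Finset.mem_insert, Finset.mem_singleton, not_or] at hx
        simp [hy, hx.1, hx.2]
    · intro hcon
      have := congrFun hcon j
      simp only [mulVec_diagonal, Pi.zero_apply, hyj] at this
      exact (mul_ne_zero hzj (by exact_mod_cast hapos.ne')) this
    · intro hcon
      have := congrFun hcon j
      simp only [mulVec_diagonal, Pi.zero_apply, hyj] at this
      exact (mul_ne_zero (star_ne_zero.mpr hzj) (by exact_mod_cast hapos.ne')) this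

/-- For a Hermitian matrix `A` (`n ≥ 1`), a complex number `z`
is a fremdervalue of `A` (i.e. `zI - A` has a nontrivial fremdervector) iff
`z` is real and lies strictly between the smallest and largest eigenvalues
of `A`. -/
theorem hermitian_fremdervalue_iff {n : ℕ}
    (A : Matrix (Fin (n + 1)) (Fin (n + 1)) ℂ) (hA : A.IsHermitian) (z : ℂ) :
    (∃ x : Fin (n + 1) → ℂ,
      star x ⬝ᵥ (z • (1 : Matrix (Fin (n + 1)) (Fin (n + 1)) ℂ) - A).mulVec x = 0 ∧
      (z • (1 : Matrix (Fin (n + 1)) (Fin (n + 1)) ℂ) - A).mulVec x ≠ 0 ∧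
      (z • (1 : Matrix (Fin (n + 1)) (Fin (n + 1)) ℂ) - A)ᴴ.mulVec x ≠ 0) ↔
    (z.im = 0 ∧ (⨅ i, hA.eigenvalues i) < z.re ∧ z.re < ⨆ i, hA.eigenvalues i) := by
  set μ := hA.eigenvalues with hμdef
  set U : Matrix (Fin (n + 1)) (Fin (n + 1)) ℂ :=
    (hA.eigenvectorUnitary : Matrix (Fin (n + 1)) (Fin (n + 1)) ℂ) with hUdef
  have hU1 : U * star U = 1 := Matrix.mem_unitaryGroup_iff.mp hA.eigenvectorUnitary.2
  have hU2 : star U * U = 1 := Matrix.mem_unitaryGroup_iff'.mp hA.eigenvectorUnitary.2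
  set N : Matrix (Fin (n + 1)) (Fin (n + 1)) ℂ := diagonal (fun i => z - (μ i : ℂ)) with hNdef
  have hM : z • (1 : Matrix (Fin (n + 1)) (Fin (n + 1)) ℂ) - A = U * N * star U := by
    have h1 : N = z • (1 : Matrix (Fin (n + 1)) (Fin (n + 1)) ℂ)
        - diagonal (fun i => (μ i : ℂ)) := by
      rw [hNdef, smul_one_eq_diagonal, ← diagonal_sub]
    have h2 : diagonal (fun i => (μ i : ℂ)) = diagonal (RCLike.ofReal ∘ μ) := rfl
    rw [h1, Matrix.mul_sub, Matrix.sub_mul, Matrix.mul_smul, Matrix.smul_mul, mul_one,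
      hU1, h2]
    exact congrArg (z • (1 : Matrix (Fin (n + 1)) (Fin (n + 1)) ℂ) - ·) hA.spectral_theorem
  have hNH : Nᴴ = diagonal (fun i => star (z - (μ i : ℂ))) := by
    rw [hNdef, diagonal_conjTranspose]
    rfl
  have hMH : (U * N * star U)ᴴ = U * Nᴴ * star U := by
    rw [← star_eq_conjTranspose, Matrix.star_mul, Matrix.star_mul, star_star,
      ← star_eq_conjTranspose, mul_assoc]
  have hstar : ∀ x : Fin (n + 1) → ℂ, star (star U *ᵥ x) = star x ᵥ* U := by
    intro x
    rw [star_mulVec, star_eq_conjTranspose, conjTranspose_conjTranspose]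
  have hcancel : ∀ w : Fin (n + 1) → ℂ, star U *ᵥ (U *ᵥ w) = w := by
    intro w
    rw [mulVec_mulVec, hU2, one_mulVec]
  have hdot : ∀ (B : Matrix (Fin (n + 1)) (Fin (n + 1)) ℂ) (x : Fin (n + 1) → ℂ),
      star x ⬝ᵥ (U * B * star U) *ᵥ x = star (star U *ᵥ x) ⬝ᵥ B *ᵥ (star U *ᵥ x) := by
    intro B x
    rw [← mulVec_mulVec, ← mulVec_mulVec, dotProduct_mulVec (star x) U, hstar]
  have hvec : ∀ (B : Matrix (Fin (n + 1)) (Fin (n + 1)) ℂ) (x : Fin (n + 1) → ℂ),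
      (U * B * star U) *ᵥ x = 0 ↔ B *ᵥ (star U *ᵥ x) = 0 := by
    intro B x
    rw [← mulVec_mulVec, ← mulVec_mulVec]
    constructor
    · intro h
      have h2 : star U *ᵥ (U *ᵥ (B *ᵥ (star U *ᵥ x))) = star U *ᵥ (0 : Fin (n + 1) → ℂ) :=
        congrArg _ h
      rwa [mulVec_zero, hcancel] at h2
    · intro h
      rw [h, mulVec_zero]
  rw [hM, hMH]
  constructor
  · rintro ⟨x, h0, h1, h2⟩
    refine (diag_fremder μ z).mp ⟨star U *ᵥ x, ?_, ?_, ?_⟩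
    · rw [← hdot N x]
      exact h0
    · exact fun h => h1 ((hvec N x).mpr h)
    · exact fun h => h2 ((hvec Nᴴ x).mpr (by rw [hNH]; exact h))
  · intro h
    obtain ⟨y, g0, g1, g2⟩ := (diag_fremder μ z).mpr h
    refine ⟨U *ᵥ y, ?_, ?_, ?_⟩
    · rw [hdot N, hcancel]
      exact g0
    · rw [Ne, hvec N, hcancel]
      exact g1
    · rw [Ne, hvec Nᴴ, hcancel, hNH]
      exact g2
end

section
/- Let A be an n×n complex skew-Hermitian matrix (Aᴴ = −A, n ≥ 1), and let λ_min and λ_max denote the smallest and largest eigenvalues of the Hermitian matrix (−i)A (these are the imaginary parts of the eigenvalues of A). A complex number z is a fremdervalue of A if and only if Re(z) = 0 and λ_min < Im(z) < λ_max. -/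
open Matrix Finset

lemma core_forward {m : ℕ} (lam : Fin (m+1) → ℝ) (b : ℝ) (w : Fin (m+1) → ℝ)
    (hw : ∀ i, 0 ≤ w i) (hsum : ∑ i, (b - lam i) * w i = 0)
    (i0 : Fin (m+1)) (hb : b ≠ lam i0) (hw0 : 0 < w i0) :
    (⨅ i, lam i) < b ∧ b < ⨆ i, lam i := by
  constructor
  · by_contra hle
    push_neg at hle
    have hall : ∀ i, b ≤ lam i := fun i =>
      hle.trans (ciInf_le (Finite.bddBelow_range lam) i)
    have hsum' : ∑ i, (lam i - b) * w i = 0 := by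
      have : ∑ i, (lam i - b) * w i = -∑ i, (b - lam i) * w i := by
        rw [← Finset.sum_neg_distrib]; congr 1; ext i; ring
      rw [this, hsum, neg_zero]
    have hzero := (Finset.sum_eq_zero_iff_of_nonneg (fun i (_ : i ∈ Finset.univ) =>
        mul_nonneg (sub_nonneg.2 (hall i)) (hw i))).1 hsum' i0 (Finset.mem_univ i0)
    rcases mul_eq_zero.1 hzero with h | h
    · exact hb (by linarith)
    · exact absurd h (ne_of_gt hw0)
  · by_contra hle
    push_neg at hle
    have hall : ∀ i, lam i ≤ b := fun i =>
      (le_ciSup (Finite.bddAbove_range lam) i).trans hle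
    have hzero := (Finset.sum_eq_zero_iff_of_nonneg (fun i (_ : i ∈ Finset.univ) =>
        mul_nonneg (sub_nonneg.2 (hall i)) (hw i))).1 hsum i0 (Finset.mem_univ i0)
    rcases mul_eq_zero.1 hzero with h | h
    · exact hb (by linarith)
    · exact absurd h (ne_of_gt hw0)

/-- For a skew-Hermitian matrix `A` (`Aᴴ = -A`, `n ≥ 1`), a
complex number `z` is a fremdervalue of `A` iff `Re z = 0` and `Im z` lies
strictly between the smallest and largest eigenvalues of the Hermitian
matrix `(-i)A`. -/
theorem skewHermitian_fremdervalue_iff {n : ℕ}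
    (A : Matrix (Fin (n + 1)) (Fin (n + 1)) ℂ) (hA : Aᴴ = -A)
    (hH : ((-Complex.I) • A).IsHermitian) (z : ℂ) :
    (∃ x : Fin (n + 1) → ℂ,
      star x ⬝ᵥ (z • (1 : Matrix (Fin (n + 1)) (Fin (n + 1)) ℂ) - A).mulVec x = 0 ∧
      (z • (1 : Matrix (Fin (n + 1)) (Fin (n + 1)) ℂ) - A).mulVec x ≠ 0 ∧
      (z • (1 : Matrix (Fin (n + 1)) (Fin (n + 1)) ℂ) - A)ᴴ.mulVec x ≠ 0) ↔
    (z.re = 0 ∧ (⨅ i, hH.eigenvalues i) < z.im ∧ z.im < ⨆ i, hH.eigenvalues i) := by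
  set lam := hH.eigenvalues with hlam
  set U : Matrix (Fin (n+1)) (Fin (n+1)) ℂ := (hH.eigenvectorUnitary : Matrix (Fin (n+1)) (Fin (n+1)) ℂ) with hU
  set D : Matrix (Fin (n+1)) (Fin (n+1)) ℂ := diagonal (RCLike.ofReal ∘ lam) with hD
  set N : Matrix (Fin (n+1)) (Fin (n+1)) ℂ := z • 1 - Complex.I • D with hNdef
  set M : Matrix (Fin (n+1)) (Fin (n+1)) ℂ := z • 1 - A with hMdef
  have hsU : star U * U = 1 := Unitary.coe_star_mul_self _
  have hUs : U * star U = 1 := Unitary.coe_mul_star_self _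
  have hspec : (-Complex.I) • A = U * D * star U := hH.spectral_theorem
  have hAeq : A = Complex.I • (U * D * star U) := by
    rw [← hspec, smul_smul]; norm_num
  have hM : M = U * N * star U := by
    have h2 : U * N * star U = z • (U * star U) - Complex.I • (U * D * star U) := by
      simp only [hNdef, Matrix.sub_mul, Matrix.mul_sub, Matrix.mul_smul, Matrix.smul_mul,
        Matrix.mul_one, Matrix.mul_assoc]
    rw [hMdef, h2, hUs, hAeq]
  have hMH : Mᴴ = U * Nᴴ * star U := by
    rw [hM]
    simp only [conjTranspose_mul, Matrix.star_eq_conjTranspose, conjTranspose_conjTranspose,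
      Matrix.mul_assoc]
  have hNv : ∀ (v : Fin (n+1) → ℂ) i, (N *ᵥ v) i = (z - Complex.I * lam i) * v i := by
    intro v i
    simp [hNdef, Matrix.sub_mulVec, Matrix.smul_mulVec, Matrix.one_mulVec,
      mulVec_diagonal, hD]
    ring
  have hNHv : ∀ (v : Fin (n+1) → ℂ) i, (Nᴴ *ᵥ v) i = star (z - Complex.I * lam i) * v i := by
    intro v i
    simp [hNdef, conjTranspose_sub, conjTranspose_smul, diagonal_conjTranspose,
      Matrix.sub_mulVec, Matrix.add_mulVec, Matrix.smul_mulVec, Matrix.one_mulVec,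
      mulVec_diagonal, hD, Complex.conj_I, Pi.star_def, Complex.conj_ofReal, Function.comp]
    ring
  have hUinj : ∀ v : Fin (n+1) → ℂ, U *ᵥ v = 0 → v = 0 := by
    intro v hv
    have : star U *ᵥ (U *ᵥ v) = v := by rw [mulVec_mulVec, hsU, one_mulVec]
    rw [hv, mulVec_zero] at this
    exact this.symm
  constructor
  · rintro ⟨x, h1, h2, h3⟩
    set y : Fin (n+1) → ℂ := star U *ᵥ x with hy
    have hxy : M *ᵥ x = U *ᵥ (N *ᵥ y) := by
      rw [hM, ← mulVec_mulVec, ← mulVec_mulVec]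
    have hstary : star y = star x ᵥ* U := by
      rw [hy, star_mulVec, Matrix.star_eq_conjTranspose, conjTranspose_conjTranspose]
    have hdot : star y ⬝ᵥ (N *ᵥ y) = 0 := by
      rw [hstary, ← dotProduct_mulVec, ← hxy]; exact h1
    have hNy : N *ᵥ y ≠ 0 := by
      intro h0; apply h2; rw [hxy, h0, mulVec_zero]
    obtain ⟨i0, hi0⟩ : ∃ i, (N *ᵥ y) i ≠ 0 := by
      by_contra hc; push_neg at hc; exact hNy (funext hc)
    rw [hNv] at hi0
    have hc0 : z - Complex.I * lam i0 ≠ 0 := fun h => hi0 (by rw [h, zero_mul])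
    have hy0 : y i0 ≠ 0 := fun h => hi0 (by rw [h, mul_zero])
    have hsumC : ∑ i, (z - Complex.I * lam i) * (Complex.normSq (y i) : ℂ) = 0 := by
      rw [← hdot, dotProduct]
      congr 1; ext i
      rw [hNv, Pi.star_apply]
      rw [show star (y i) * ((z - Complex.I * ↑(lam i)) * y i)
        = (z - Complex.I * ↑(lam i)) * (y i * star (y i)) from by ring]
      rw [Complex.star_def, Complex.mul_conj]
    have hre : ∑ i, z.re * Complex.normSq (y i) = 0 := by
      have := congrArg Complex.re hsumC
      simpa [Complex.mul_re] using this
    have him : ∑ i, (z.im - lam i) * Complex.normSq (y i) = 0 := by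
      have := congrArg Complex.im hsumC
      simpa [Complex.mul_im] using this
    have hzre : z.re = 0 := by
      by_contra hzre
      have hsw : ∑ i, Complex.normSq (y i) = 0 := by
        have h' : z.re * ∑ i, Complex.normSq (y i) = 0 := by rw [Finset.mul_sum]; exact hre
        exact (mul_eq_zero.1 h').resolve_left hzre
      have := (Finset.sum_eq_zero_iff_of_nonneg (fun i (_ : i ∈ Finset.univ) =>
        Complex.normSq_nonneg (y i))).1 hsw i0 (Finset.mem_univ i0)
      exact hy0 (Complex.normSq_eq_zero.1 this)
    have hb : z.im ≠ lam i0 := by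
      intro h
      apply hc0
      apply Complex.ext <;> simp [hzre, ← h]
    exact ⟨hzre, core_forward lam z.im (fun i => Complex.normSq (y i))
      (fun i => Complex.normSq_nonneg _) him i0 hb (Complex.normSq_pos.2 hy0)⟩
  · rintro ⟨hzre, hlo, hhi⟩
    obtain ⟨i0, hi0⟩ := exists_eq_ciInf_of_finite (f := lam)
    obtain ⟨i1, hi1⟩ := exists_eq_ciSup_of_finite (f := lam)
    have h0 : lam i0 < z.im := by rw [hi0]; exact hlo
    have h1 : z.im < lam i1 := by rw [hi1]; exact hhi
    have hne : i0 ≠ i1 := by intro h; rw [h] at h0; linarith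
    set a := Real.sqrt (lam i1 - z.im) with ha
    set b := Real.sqrt (z.im - lam i0) with hbdef
    have ha2 : a^2 = lam i1 - z.im := Real.sq_sqrt (by linarith)
    have hb2 : b^2 = z.im - lam i0 := Real.sq_sqrt (by linarith)
    have hapos : 0 < a := Real.sqrt_pos.2 (by linarith)
    have hbpos : 0 < b := Real.sqrt_pos.2 (by linarith)
    set y : Fin (n+1) → ℂ := fun i => if i = i0 then (a:ℂ) else if i = i1 then (b:ℂ) else 0 with hy
    have hyy : star U *ᵥ (U *ᵥ y) = y := by rw [mulVec_mulVec, hsU, one_mulVec]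
    have hMx : M *ᵥ (U *ᵥ y) = U *ᵥ (N *ᵥ y) := by
      rw [hM, ← mulVec_mulVec, ← mulVec_mulVec, hyy]
    have hMHx : Mᴴ *ᵥ (U *ᵥ y) = U *ᵥ (Nᴴ *ᵥ y) := by
      rw [hMH, ← mulVec_mulVec, ← mulVec_mulVec, hyy]
    have hyi0 : y i0 = (a:ℂ) := by simp [hy]
    have hyi1 : y i1 = (b:ℂ) := by simp [hy, hne.symm]
    have hc0 : z - Complex.I * lam i0 ≠ 0 := by
      intro h
      have := congrArg Complex.im h
      simp at this
      linarith
    refine ⟨U *ᵥ y, ?_, ?_, ?_⟩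
    · rw [hMx, star_mulVec, dotProduct_mulVec, vecMul_vecMul,
        ← Matrix.star_eq_conjTranspose, hsU, vecMul_one, dotProduct]
      rw [← Finset.sum_subset (Finset.subset_univ ({i0, i1} : Finset (Fin (n+1))))
        (fun i _ hi => ?_)]
      · rw [Finset.sum_pair hne]
        simp only [hNv, hyi0, hyi1, Pi.star_apply]
        apply Complex.ext <;>
          simp [Complex.mul_re, Complex.mul_im, hzre, Complex.conj_ofReal] <;>
          nlinarith [ha2, hb2]
      · simp only [Finset.mem_insert, Finset.mem_singleton, not_or] at hi
        simp [hy, hi.1, hi.2]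
    · intro hzero
      rw [hMx] at hzero
      have := congrFun (hUinj _ hzero) i0
      rw [hNv, hyi0] at this
      exact hc0 ((mul_eq_zero.1 this).resolve_right
        (Complex.ofReal_ne_zero.2 hapos.ne'))
    · intro hzero
      rw [hMHx] at hzero
      have := congrFun (hUinj _ hzero) i0
      rw [hNHv, hyi0] at this
      have h' := (mul_eq_zero.1 this).resolve_right (Complex.ofReal_ne_zero.2 hapos.ne')
      exact hc0 (by simpa [sub_eq_add_neg] using congrArg star h')
end
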